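/- (Classification of solutions for n = 13, one larger multiplicity.) Define U : ℤ² → ℤ² by U(d, m) = (−649d − 2340m + 15, −180d − 649m + 5). Then U is a bijection of ℤ² mapping the set of integer solutions (d, m) of (2d+3)² − 13(2m+1)² + 96m = −4 onto itself, and every integer solution (d, m) of this equation has the form U^j(s) for some j ∈ ℤ and some s ∈ {(−3, 0), (0, 0)}. -/

import Mathlib

/-- The affine transformation `U(d, m) = (-649d - 2340m + 15, -180d - 649m + 5)`
of `ℤ²`, as a bijection (its linear part has determinant `(-649)² - 2340·180 = 1`). -/
def U : Equiv.Perm (ℤ × ℤ) where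
  toFun p := (-649 * p.1 - 2340 * p.2 + 15, -180 * p.1 - 649 * p.2 + 5)
  invFun p := (-649 * p.1 + 2340 * p.2 - 1965, 180 * p.1 - 649 * p.2 + 545)
  left_inv := by intro ⟨a, b⟩; simp only [Prod.mk.injEq]; constructor <;> ring
  right_inv := by intro ⟨a, b⟩; simp only [Prod.mk.injEq]; constructor <;> ring

/-- The solution set of `(2d+3)² - 13(2m+1)² + 96m = -4`. -/
def Sol13'' : Set (ℤ × ℤ) :=
  {p | (2 * p.1 + 3) ^ 2 - 13 * (2 * p.2 + 1) ^ 2 + 96 * p.2 = -4}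

/-- Pell-style descent inequality. -/
private lemma descent13 (X a : ℤ) (hX : 119 ≤ X) (ha : 1 ≤ a)
    (h : 5475600*a^2 = 421200*X^2 - 1684800) : (649*X - 2340*a)^2 < X^2 := by
  have h1 : 2340*a < 650*X := by nlinarith
  have h2 : 648*X < 2340*a := by nlinarith
  nlinarith [mul_pos (sub_pos.2 h2) (sub_pos.2 h1)]

private lemma step_up13 (d m : ℤ) (j : ℤ) (s : ℤ × ℤ)
    (hq : ((-649*d-2340*m+15 : ℤ), (-180*d-649*m+5 : ℤ)) = (U^j) s) :
    ((d, m) : ℤ × ℤ) = (U^(j-1)) s := by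
  have h1 : U ((d, m) : ℤ × ℤ) = ((-649*d-2340*m+15 : ℤ), (-180*d-649*m+5 : ℤ)) := rfl
  have h2 : U⁻¹ * U^j = U^(j-1) := by group
  calc ((d,m) : ℤ×ℤ) = U⁻¹ (U ((d,m) : ℤ×ℤ)) := (Equiv.symm_apply_apply U _).symm
    _ = U⁻¹ ((U^j) s) := by rw [h1, hq]
    _ = (U^(j-1)) s := by rw [← Equiv.Perm.mul_apply, h2]

private lemma step_down13 (d m : ℤ) (j : ℤ) (s : ℤ × ℤ)
    (hq : ((-649*d+2340*m-1965 : ℤ), (180*d-649*m+545 : ℤ)) = (U^j) s) :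
    ((d, m) : ℤ × ℤ) = (U^(j+1)) s := by
  have h1 : U ((-649*d+2340*m-1965 : ℤ), (180*d-649*m+545 : ℤ)) = ((d, m) : ℤ × ℤ) := by
    simp only [U, Equiv.coe_fn_mk, Prod.mk.injEq]
    constructor <;> ring
  have h2 : U * U^j = U^(j+1) := by group
  calc ((d,m) : ℤ×ℤ) = U (((-649*d+2340*m-1965 : ℤ), (180*d-649*m+545 : ℤ)) : ℤ×ℤ) := h1.symm
    _ = U ((U^j) s) := by rw [hq]
    _ = (U^(j+1)) s := by rw [← Equiv.Perm.mul_apply, h2]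

private lemma key13 : ∀ (N : ℕ) (d m : ℤ),
    (2*d+3)^2 - 13*(2*m+1)^2 + 96*m = -4 → ((26*m-11)^2).toNat = N →
    ∃ (j : ℤ) (s : ℤ × ℤ), s ∈ ({(-3, 0), (0, 0)} : Set (ℤ × ℤ)) ∧
      ((d, m) : ℤ × ℤ) = (U ^ j) s := by
  intro N
  induction N using Nat.strong_induction_on with
  | _ N IH =>
    intro d m h hN
    by_cases hm : -4 ≤ m ∧ m ≤ 4
    · -- base case
      obtain ⟨hm1, hm2⟩ := hm
      have hbase : (d = -3 ∧ m = 0) ∨ (d = 0 ∧ m = 0) := by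
        have hd1 : -17 ≤ d := by
          nlinarith [mul_nonneg (show (0:ℤ) ≤ m+4 by omega) (show (0:ℤ) ≤ 63-13*m by omega)]
        have hd2 : d ≤ 14 := by
          nlinarith [mul_nonneg (show (0:ℤ) ≤ m+4 by omega) (show (0:ℤ) ≤ 63-13*m by omega)]
        interval_cases d <;> interval_cases m <;> revert h <;> norm_num
      refine ⟨0, (d, m), ?_, by simp⟩
      rcases hbase with ⟨hd, hm⟩ | ⟨hd, hm⟩ <;> subst hd <;> subst hm <;> simp
    · -- inductive step
      have hpell : 5475600*(2*d+3)^2 = 421200*(26*m-11)^2 - 1684800 := by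
        linear_combination 5475600 * h
      have hmm : m ≤ -5 ∨ 5 ≤ m := by omega
      have hX0 : 26*m-11 ≠ 0 := by omega
      have hNpos : (0 : ℤ) < (26*m-11)^2 := by positivity
      rcases le_or_gt d (-2) with hd | hd
      · rcases hmm with hm5 | hm5
        · have h' : (2*(-649*d+2340*m-1965)+3)^2 - 13*(2*(180*d-649*m+545)+1)^2 + 96*(180*d-649*m+545) = -4 := by
            linear_combination h
          have hdes := descent13 (11-26*m) (-(2*d+3)) (by omega) (by omega) (by linear_combination hpell)
          have hlt : ((26*(180*d-649*m+545)-11)^2).toNat < N := by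
            rw [← hN]
            refine (Int.toNat_lt_toNat hNpos).mpr ?_
            have e1 : (26*(180*d-649*m+545)-11)^2 = (649*(11-26*m) - 2340*(-(2*d+3)))^2 := by ring
            have e2 : (26*m-11)^2 = (11-26*m)^2 := by ring
            rw [e1, e2]; exact hdes
          obtain ⟨j, s, hs, hq⟩ := IH _ hlt (-649*d+2340*m-1965) (180*d-649*m+545) h' rfl
          exact ⟨j+1, s, hs, step_down13 d m j s hq⟩
        · have h' : (2*(-649*d-2340*m+15)+3)^2 - 13*(2*(-180*d-649*m+5)+1)^2 + 96*(-180*d-649*m+5) = -4 := by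
            linear_combination h
          have hdes := descent13 (26*m-11) (-(2*d+3)) (by omega) (by omega) (by linear_combination hpell)
          have hlt : ((26*(-180*d-649*m+5)-11)^2).toNat < N := by
            rw [← hN]
            refine (Int.toNat_lt_toNat hNpos).mpr ?_
            have e1 : (26*(-180*d-649*m+5)-11)^2 = (649*(26*m-11) - 2340*(-(2*d+3)))^2 := by ring
            have e2 : (26*m-11)^2 = (26*m-11)^2 := by ring
            rw [e1, e2]; exact hdes
          obtain ⟨j, s, hs, hq⟩ := IH _ hlt (-649*d-2340*m+15) (-180*d-649*m+5) h' rfl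
          exact ⟨j-1, s, hs, step_up13 d m j s hq⟩
      · rcases hmm with hm5 | hm5
        · have h' : (2*(-649*d-2340*m+15)+3)^2 - 13*(2*(-180*d-649*m+5)+1)^2 + 96*(-180*d-649*m+5) = -4 := by
            linear_combination h
          have hdes := descent13 (11-26*m) (2*d+3) (by omega) (by omega) (by linear_combination hpell)
          have hlt : ((26*(-180*d-649*m+5)-11)^2).toNat < N := by
            rw [← hN]
            refine (Int.toNat_lt_toNat hNpos).mpr ?_
            have e1 : (26*(-180*d-649*m+5)-11)^2 = (649*(11-26*m) - 2340*(2*d+3))^2 := by ring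
            have e2 : (26*m-11)^2 = (11-26*m)^2 := by ring
            rw [e1, e2]; exact hdes
          obtain ⟨j, s, hs, hq⟩ := IH _ hlt (-649*d-2340*m+15) (-180*d-649*m+5) h' rfl
          exact ⟨j-1, s, hs, step_up13 d m j s hq⟩
        · have h' : (2*(-649*d+2340*m-1965)+3)^2 - 13*(2*(180*d-649*m+545)+1)^2 + 96*(180*d-649*m+545) = -4 := by
            linear_combination h
          have hdes := descent13 (26*m-11) (2*d+3) (by omega) (by omega) (by linear_combination hpell)
          have hlt : ((26*(180*d-649*m+545)-11)^2).toNat < N := by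
            rw [← hN]
            refine (Int.toNat_lt_toNat hNpos).mpr ?_
            have e1 : (26*(180*d-649*m+545)-11)^2 = (649*(26*m-11) - 2340*(2*d+3))^2 := by ring
            have e2 : (26*m-11)^2 = (26*m-11)^2 := by ring
            rw [e1, e2]; exact hdes
          obtain ⟨j, s, hs, hq⟩ := IH _ hlt (-649*d+2340*m-1965) (180*d-649*m+545) h' rfl
          exact ⟨j+1, s, hs, step_down13 d m j s hq⟩

/-- Classification of solutions for `n = 13`, one larger multiplicity: `U` is a
bijection of `ℤ²` mapping the solution set of `(2d+3)² - 13(2m+1)² + 96m = -4`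
onto itself, and every solution is `U^j(s)` for some `j ∈ ℤ` and some
fundamental solution `s ∈ {(-3,0), (0,0)}`. -/
theorem classification_13_one_larger :
    Function.Bijective (⇑U) ∧
    (⇑U) '' Sol13'' = Sol13'' ∧
    ∀ p ∈ Sol13'', ∃ (j : ℤ) (s : ℤ × ℤ),
      s ∈ ({(-3, 0), (0, 0)} : Set (ℤ × ℤ)) ∧ p = (U ^ j) s := by
  have hfwd : ∀ p ∈ Sol13'', U p ∈ Sol13'' := by
    rintro ⟨d, m⟩ hp
    simp only [Sol13'', Set.mem_setOf_eq] at hp ⊢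
    show (2 * (-649*d-2340*m+15) + 3)^2 - 13 * (2 * (-180*d-649*m+5) + 1)^2
        + 96 * (-180*d-649*m+5) = -4
    linear_combination hp
  have hbwd : ∀ p ∈ Sol13'', U.symm p ∈ Sol13'' := by
    rintro ⟨d, m⟩ hp
    simp only [Sol13'', Set.mem_setOf_eq] at hp ⊢
    show (2 * (-649*d+2340*m-1965) + 3)^2 - 13 * (2 * (180*d-649*m+545) + 1)^2
        + 96 * (180*d-649*m+545) = -4
    linear_combination hp
  refine ⟨U.bijective, ?_, ?_⟩
  · apply Set.Subset.antisymm
    · rintro q ⟨p, hp, rfl⟩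
      exact hfwd p hp
    · intro q hq
      exact ⟨U.symm q, hbwd q hq, U.apply_symm_apply q⟩
  · rintro ⟨d, m⟩ hp
    have hp' : (2*d+3)^2 - 13*(2*m+1)^2 + 96*m = -4 := by
      simpa [Sol13''] using hp
    exact key13 ((26*m-11)^2).toNat d m hp' rfl
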